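/- Let f: G → H be a surjective group homomorphism with finite kernel, and let S be a generating n-tuple of G. If the connected component of S in Γ_n(G) has exponential growth, then the connected component of f(S) in Γ_n(H) has exponential growth. -/

import Mathlib

open Filter Subgroup Set

/-- `T` is obtained from `S` by a single Nielsen move. -/
def nielsenMove {G : Type*} [Group G] {n : ℕ} (S T : Fin n → G) : Prop :=
  ∃ i j : Fin n, i ≠ j ∧
    (T = Function.update S j (S j * S i) ∨ T = Function.update S j (S j * (S i)⁻¹) ∨
     T = Function.update S j (S i * S j) ∨ T = Function.update S j ((S i)⁻¹ * S j))

/-- The product replacement graph of `G` on `n`-tuples: edges are Nielsen moves.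
(Nielsen moves preserve generation, so the connected component of a generating
`n`-tuple consists exactly of generating `n`-tuples.) -/
def PRG (G : Type*) [Group G] (n : ℕ) : SimpleGraph (Fin n → G) where
  Adj S T := S ≠ T ∧ (nielsenMove S T ∨ nielsenMove T S)
  symm := ⟨fun S T h => ⟨h.1.symm, h.2.symm⟩⟩
  loopless := ⟨fun S h => h.1 rfl⟩

/-- The ball of radius `r` around vertex `v` in a graph. -/
def gball {V : Type*} (Γ : SimpleGraph V) (v : V) (r : ℕ) : Set V :=
  {w | ∃ p : Γ.Walk v w, p.length ≤ r}

/-- `Γ` has exponential growth from `v`. -/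
def expGrowthFrom {V : Type*} (Γ : SimpleGraph V) (v : V) : Prop :=
  ∃ α : ℝ, 1 < α ∧ ∀ᶠ r : ℕ in atTop, α ^ r ≤ ((gball Γ v r).ncard : ℝ)

/-- The ball of radius `r` in the Cayley graph of `G` with respect to the tuple `S`. -/
def cayleyBall {G : Type*} [Group G] {n : ℕ} (S : Fin n → G) (r : ℕ) : Set G :=
  {g | ∃ l : List G, l.length ≤ r ∧ (∀ x ∈ l, x ∈ Set.range S ∨ x⁻¹ ∈ Set.range S) ∧
    l.prod = g}

/-!
Applying `f` coordinatewise sends each Nielsen move either to a Nielsen move or to a trivial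
step, and every Nielsen move out of `f ∘ T` lifts to one out of `T`. Hence the ball of radius `r`
around `f ∘ S` in `Γ_n(H)` is exactly the image of the ball around `S` in `Γ_n(G)`. The fibres of
`x ↦ f ∘ x` are cosets of `(ker f)ⁿ`, so the image ball has at least `|ker f|⁻ⁿ` times as many
elements, and exponential growth survives with any base strictly between `1` and the original one.
-/

lemma exists_one_lt_pow_le_of_pow_le_mul {a : ℕ → ℕ} {α : ℝ} {C : ℕ} (hα : 1 < α)
    (h : ∀ᶠ r in atTop, α ^ r ≤ C * a r) : ∃ β : ℝ, 1 < β ∧ ∀ᶠ r in atTop, β ^ r ≤ a r := by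
  obtain rfl | hC := C.eq_zero_or_pos
  · obtain ⟨r, hr⟩ := h.exists
    have : 0 < α ^ r := by positivity
    simp only [CharP.cast_eq_zero, zero_mul] at hr
    linarith
  obtain ⟨β, hβ, hβα⟩ := exists_between hα
  have hαβ : 1 < α / β := (one_lt_div (by linarith)).2 hβα
  refine ⟨β, hβ, ?_⟩
  filter_upwards [h, (tendsto_pow_atTop_atTop_of_one_lt hαβ).eventually_ge_atTop (C : ℝ)]
    with r hr hCr
  refine le_of_mul_le_mul_left ?_ (Nat.cast_pos.2 hC : (0 : ℝ) < C)
  calc (C : ℝ) * β ^ r ≤ (α / β) ^ r * β ^ r := by gcongr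
    _ = α ^ r := by rw [← mul_pow, div_mul_cancel₀ _ (by linarith)]
    _ ≤ C * a r := hr

lemma Set.ncard_le_mul_ncard_image {α β : Type*} {φ : α → β} {s : Set α} (hs : s.Finite)
    {C : ℕ} (hC : ∀ b, (φ ⁻¹' {b}).encard ≤ C) : s.ncard ≤ C * (φ '' s).ncard := by
  classical
  lift s to Finset α using hs
  rw [← Finset.coe_image, Set.ncard_coe_finset, Set.ncard_coe_finset]
  refine Finset.card_le_mul_card_image s C fun b _ => ?_
  rw [← Nat.cast_le (α := ℕ∞), ← Set.encard_coe_eq_coe_finsetCard]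
  exact (Set.encard_le_encard fun _ ha => (Finset.mem_filter.1 ha).2).trans (hC b)

section GraphMap

variable {V W : Type*} {Γ : SimpleGraph V} {Γ' : SimpleGraph W} {φ : V → W}

lemma exists_walk_map_length_le (hadj : ∀ u w, Γ.Adj u w → φ u = φ w ∨ Γ'.Adj (φ u) (φ w))
    {u w : V} (p : Γ.Walk u w) : ∃ q : Γ'.Walk (φ u) (φ w), q.length ≤ p.length := by
  induction p with
  | nil => exact ⟨.nil, le_rfl⟩
  | cons h _ ih =>
    obtain ⟨q, hq⟩ := ih
    rcases hadj _ _ h with he | h'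
    · exact ⟨q.copy he.symm rfl, by simpa using hq.trans (Nat.le_succ _)⟩
    · exact ⟨q.cons h', by simpa using hq⟩

lemma exists_walk_lift (hlift : ∀ u w', Γ'.Adj (φ u) w' → ∃ w, Γ.Adj u w ∧ φ w = w')
    {u' w' : W} (p : Γ'.Walk u' w') (u : V) (hu : φ u = u') :
    ∃ (w : V) (q : Γ.Walk u w), φ w = w' ∧ q.length = p.length := by
  induction p generalizing u with
  | nil => exact ⟨u, .nil, hu, rfl⟩
  | cons h _ ih =>
    subst hu
    obtain ⟨v, hv, rfl⟩ := hlift _ _ h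
    obtain ⟨w, q, hw, hq⟩ := ih v rfl
    exact ⟨w, q.cons hv, hw, by simp [hq]⟩

lemma gball_eq_image (hadj : ∀ u w, Γ.Adj u w → φ u = φ w ∨ Γ'.Adj (φ u) (φ w))
    (hlift : ∀ u w', Γ'.Adj (φ u) w' → ∃ w, Γ.Adj u w ∧ φ w = w') (v : V) (r : ℕ) :
    gball Γ' (φ v) r = φ '' gball Γ v r := by
  ext w'
  constructor
  · rintro ⟨p, hp⟩
    obtain ⟨w, q, rfl, hq⟩ := exists_walk_lift hlift p v rfl
    exact ⟨w, ⟨q, hq ▸ hp⟩, rfl⟩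
  · rintro ⟨w, ⟨p, hp⟩, rfl⟩
    obtain ⟨q, hq⟩ := exists_walk_map_length_le hadj p
    exact ⟨q, hq.trans hp⟩

theorem expGrowthFrom.map (hadj : ∀ u w, Γ.Adj u w → φ u = φ w ∨ Γ'.Adj (φ u) (φ w))
    (hlift : ∀ u w', Γ'.Adj (φ u) w' → ∃ w, Γ.Adj u w ∧ φ w = w') {C : ℕ}
    (hfib : ∀ b, (φ ⁻¹' {b}).encard ≤ C) {v : V} (h : expGrowthFrom Γ v) :
    expGrowthFrom Γ' (φ v) := by
  obtain ⟨α, hα, hball⟩ := h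
  refine exists_one_lt_pow_le_of_pow_le_mul (C := C) hα ?_
  filter_upwards [hball] with r hr
  have hfin : (gball Γ v r).Finite :=
    Set.finite_of_ncard_pos (Nat.cast_pos.1 ((pow_pos (by linarith) r).trans_le hr))
  rw [gball_eq_image hadj hlift]
  exact hr.trans (mod_cast Set.ncard_le_mul_ncard_image hfin hfib)

end GraphMap

lemma MonoidHom.encard_preimage_comp_le {G H : Type*} [Group G] [Group H] (f : G →* H)
    {ι : Type*} (b : ι → H) :
    ((f ∘ ·) ⁻¹' {b} : Set (ι → G)).encard ≤ ENat.card f.ker ^ ENat.card ι := by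
  obtain hempty | ⟨x₀, hx₀⟩ := ((f ∘ ·) ⁻¹' {b} : Set (ι → G)).eq_empty_or_nonempty
  · simp [hempty]
  rw [← ENat.card_fun]
  refine ENat.card_le_card_of_injective
    (f := fun x i => ⟨(x₀ i)⁻¹ * x.1 i, by
      rw [MonoidHom.mem_ker, map_mul, map_inv, inv_mul_eq_one]
      exact (congrFun hx₀ i).trans (congrFun x.2 i).symm⟩) ?_
  intro x y hxy
  ext i
  simpa using congrArg (fun z => (z i : G)) hxy

section Nielsen

variable {G H : Type*} [Group G] [Group H] {n : ℕ}

open Function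

-- Each move is undone by the move with the inverse factor on the same side.
lemma nielsenMove.symm {S T : Fin n → G} (h : nielsenMove S T) : nielsenMove T S := by
  obtain ⟨i, j, hij, hT⟩ := h
  refine ⟨i, j, hij, ?_⟩
  rcases hT with rfl | rfl | rfl | rfl <;> simp [update_of_ne hij]

lemma nielsenMove.map (f : G →* H) {S T : Fin n → G} (h : nielsenMove S T) :
    nielsenMove (f ∘ S) (f ∘ T) := by
  obtain ⟨i, j, hij, h⟩ := h
  refine ⟨i, j, hij, ?_⟩
  rcases h with rfl | rfl | rfl | rfl <;> simp [comp_update]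

lemma nielsenMove.exists_lift (f : G →* H) (S : Fin n → G) {T' : Fin n → H}
    (h : nielsenMove (f ∘ S) T') : ∃ T, nielsenMove S T ∧ f ∘ T = T' := by
  obtain ⟨i, j, hij, h⟩ := h
  rcases h with rfl | rfl | rfl | rfl
  · exact ⟨_, ⟨i, j, hij, Or.inl rfl⟩, by simp [comp_update]⟩
  · exact ⟨_, ⟨i, j, hij, Or.inr (Or.inl rfl)⟩, by simp [comp_update]⟩
  · exact ⟨_, ⟨i, j, hij, Or.inr (Or.inr (Or.inl rfl))⟩, by simp [comp_update]⟩
  · exact ⟨_, ⟨i, j, hij, Or.inr (Or.inr (Or.inr rfl))⟩, by simp [comp_update]⟩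

lemma PRG_adj_comp (f : G →* H) {S T : Fin n → G} (h : (PRG G n).Adj S T) :
    f ∘ S = f ∘ T ∨ (PRG H n).Adj (f ∘ S) (f ∘ T) := by
  by_cases he : f ∘ S = f ∘ T
  · exact Or.inl he
  · exact Or.inr ⟨he, h.2.imp (nielsenMove.map f) (nielsenMove.map f)⟩

lemma PRG_exists_adj_of_adj_comp (f : G →* H) (S : Fin n → G) {T' : Fin n → H}
    (h : (PRG H n).Adj (f ∘ S) T') : ∃ T, (PRG G n).Adj S T ∧ f ∘ T = T' := by
  obtain ⟨hne, hm⟩ := h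
  obtain ⟨T, hT, rfl⟩ := nielsenMove.exists_lift f S (hm.elim id nielsenMove.symm)
  exact ⟨T, ⟨fun hST => hne (hST ▸ rfl), Or.inl hT⟩, rfl⟩

end Nielsen

theorem stmt9_general {G H : Type*} [Group G] [Group H]
    (f : G →* H) (hker : (f.ker : Set G).Finite)
    {n : ℕ} (S : Fin n → G)
    (h : expGrowthFrom (PRG G n) S) :
    expGrowthFrom (PRG H n) (f ∘ S) := by
  have : Finite f.ker := hker.to_subtype
  refine h.map (φ := (f ∘ ·)) (fun _ _ => PRG_adj_comp f)
    (fun S _ => PRG_exists_adj_of_adj_comp f S) (C := Nat.card f.ker ^ n) fun b => ?_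
  rw [Nat.cast_pow, ← ENat.card_eq_coe_natCard]
  simpa using f.encard_preimage_comp_le b

theorem stmt9 {G H : Type*} [Group G] [Group H] (hGfg : Group.FG G) (hHfg : Group.FG H)
    (f : G →* H) (hf : Function.Surjective f) (hker : (f.ker : Set G).Finite)
    {n : ℕ} (S : Fin n → G) (hS : closure (Set.range S) = ⊤)
    (h : expGrowthFrom (PRG G n) S) :
    expGrowthFrom (PRG H n) (f ∘ S) :=
  stmt9_general f hker S h
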